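/- Let T: X → X be a map on a Banach space X, x̄ ∈ X, and suppose T is Fréchet differentiable with T'(x̄) = 0 and T''(x̄) a bounded bilinear map of norm at most κγ (with T quadratic so T' is affine). If ‖T(x̄) − x̄‖ ≤ κδ and 2κ²γδ < 1, then for any ρ with (1−√(1−2κ²γδ))/(κγ) ≤ ρ < 1/(κγ), T maps the closed ball B(x̄, ρ) into itself and is a contraction on it; consequently T has a unique fixed point in B(x̄, ρ). -/
import Mathlib

set_option maxHeartbeats 800000

/-- The core contraction estimate for the Newton-like operator `T`. -/
theorem newton_like_contraction
    {X : Type*} [NormedAddCommGroup X] [NormedSpace ℝ X] [CompleteSpace X]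
    (T : X → X) (xb : X) (B : X →L[ℝ] X →L[ℝ] X)
    (hquad : ∀ x, T x = T xb + (1/2 : ℝ) • B (x - xb) (x - xb))
    (κ γ δ : ℝ) (hκ : 0 ≤ κ) (hγ : 0 ≤ γ) (hδ : 0 ≤ δ)
    (hB : ∀ x₁ x₂ : X, ‖B x₁ x₂‖ ≤ κ * γ * ‖x₁‖ * ‖x₂‖)
    (hTxb : ‖T xb - xb‖ ≤ κ * δ)
    (hcond : 2 * κ ^ 2 * γ * δ < 1)
    (ρ : ℝ) (hρ₁ : (1 - Real.sqrt (1 - 2 * κ ^ 2 * γ * δ)) / (κ * γ) ≤ ρ)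
    (hρ₂ : ρ < 1 / (κ * γ)) :
    Set.MapsTo T (Metric.closedBall xb ρ) (Metric.closedBall xb ρ)
      ∧ (∃ K : NNReal, K < 1 ∧ LipschitzOnWith K T (Metric.closedBall xb ρ))
      ∧ (∃! x : X, x ∈ Metric.closedBall xb ρ ∧ T x = x) := by
  rcases (mul_nonneg hκ hγ).eq_or_lt with h0 | hpos
  · -- degenerate case κ*γ = 0 : hypotheses are contradictory
    rw [← h0, div_zero] at hρ₁ hρ₂
    exact absurd hρ₂ (not_lt.2 (by linarith))
  -- main case: a := κ*γ > 0
  set a := κ * γ with ha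
  set s := Real.sqrt (1 - 2 * κ ^ 2 * γ * δ) with hs
  have harg : (0:ℝ) ≤ 1 - 2 * κ ^ 2 * γ * δ := by
    have : 0 ≤ 2 * κ ^ 2 * γ * δ := by positivity
    linarith
  have hs_sq : s ^ 2 = 1 - 2 * κ ^ 2 * γ * δ := Real.sq_sqrt harg
  have hs_nonneg : 0 ≤ s := Real.sqrt_nonneg _
  have hs_le_one : s ≤ 1 :=
    Real.sqrt_le_one.mpr (by nlinarith [mul_nonneg (mul_nonneg (sq_nonneg κ) hγ) hδ])
  have hkd : κ ^ 2 * γ * δ = a * (κ * δ) := by ring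
  have hlow : 1 - s ≤ a * ρ := by
    rw [div_le_iff₀ hpos] at hρ₁; linarith [hρ₁]
  have hhigh : a * ρ < 1 := by
    rw [lt_div_iff₀ hpos] at hρ₂; linarith [hρ₂]
  have hρ0 : 0 ≤ ρ := by
    have : 0 ≤ a * ρ := by linarith
    exact nonneg_of_mul_nonneg_right this hpos
  -- the key quadratic inequality : (1/2) a ρ² + κδ ≤ ρ
  have hkey : (1/2) * a * ρ ^ 2 + κ * δ ≤ ρ := by
    have h1 : (a * ρ - 1) ^ 2 ≤ s ^ 2 := by nlinarith
    rw [hs_sq] at h1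
    have h2 : a * (a * ρ ^ 2 - 2 * ρ + 2 * (κ * δ)) ≤ 0 := by nlinarith
    nlinarith
  -- MapsTo
  have hmaps : Set.MapsTo T (Metric.closedBall xb ρ) (Metric.closedBall xb ρ) := by
    intro x hx
    rw [Metric.mem_closedBall, dist_eq_norm] at hx ⊢
    have hxn : ‖x - xb‖ ≤ ρ := hx
    have : T x - xb = (T xb - xb) + (1/2 : ℝ) • B (x - xb) (x - xb) := by
      rw [hquad x]; abel
    rw [this]
    calc ‖(T xb - xb) + (1/2 : ℝ) • B (x - xb) (x - xb)‖
        ≤ ‖T xb - xb‖ + ‖(1/2 : ℝ) • B (x - xb) (x - xb)‖ := norm_add_le _ _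
      _ ≤ κ * δ + (1/2) * (a * ‖x - xb‖ * ‖x - xb‖) := by
          refine add_le_add hTxb ?_
          rw [norm_smul]
          have := hB (x - xb) (x - xb)
          simp only [Real.norm_eq_abs, abs_of_pos (by norm_num : (0:ℝ) < 1/2)]
          nlinarith [norm_nonneg (B (x - xb) (x - xb))]
      _ ≤ κ * δ + (1/2) * (a * ρ * ρ) := by
          have h1 : a * ‖x - xb‖ * ‖x - xb‖ ≤ a * ρ * ρ := by
            nlinarith [mul_le_mul hxn hxn (norm_nonneg (x - xb)) hρ0, hpos.le]
          linarith
      _ ≤ ρ := by nlinarith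
  -- Lipschitz estimate
  have hKnn : 0 ≤ a * ρ := by positivity
  set K : NNReal := ⟨a * ρ, hKnn⟩ with hK
  have hK1 : K < 1 := by
    rw [← NNReal.coe_lt_coe]; exact hhigh
  have hlip : LipschitzOnWith K T (Metric.closedBall xb ρ) := by
    apply LipschitzOnWith.of_dist_le_mul
    intro x hx y hy
    rw [Metric.mem_closedBall, dist_eq_norm] at hx hy
    rw [dist_eq_norm, dist_eq_norm]
    have hdiff : T x - T y =
        (1/2 : ℝ) • (B (x - y) (x - xb) + B (y - xb) (x - y)) := by
      have hxy : (x : X) - y = (x - xb) - (y - xb) := by abel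
      rw [hquad x, hquad y, hxy]
      simp only [map_sub, ContinuousLinearMap.sub_apply]
      module
    rw [hdiff, norm_smul]
    simp only [Real.norm_eq_abs, abs_of_pos (by norm_num : (0:ℝ) < 1/2)]
    have hb1 := hB (x - y) (x - xb)
    have hb2 := hB (y - xb) (x - y)
    have htri : ‖B (x - y) (x - xb) + B (y - xb) (x - y)‖ ≤
        a * ‖x - y‖ * ‖x - xb‖ + a * ‖y - xb‖ * ‖x - y‖ :=
      le_trans (norm_add_le _ _) (add_le_add hb1 hb2)
    have hKcoe : (K : ℝ) = a * ρ := rfl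
    rw [hKcoe]
    clear hK
    nlinarith [norm_nonneg (x - y), norm_nonneg (x - xb), norm_nonneg (y - xb),
      mul_nonneg hpos.le (norm_nonneg (x - y))]
  refine ⟨hmaps, ⟨K, hK1, hlip⟩, ?_⟩
  -- existence and uniqueness of the fixed point
  have hcontr : ContractingWith K (hmaps.restrict T _ _) := by
    refine ⟨hK1, fun x y => ?_⟩
    rw [Subtype.edist_eq]
    exact hlip x.2 y.2
  have hxb_mem : xb ∈ Metric.closedBall xb ρ := Metric.mem_closedBall_self hρ0
  obtain ⟨y, hy_mem, hy_fix, -, -⟩ :=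
    ContractingWith.exists_fixedPoint' (Metric.isClosed_closedBall.isComplete) hmaps hcontr
      hxb_mem (edist_ne_top _ _)
  refine ⟨y, ⟨hy_mem, hy_fix⟩, ?_⟩
  rintro z ⟨hz_mem, hz_fix⟩
  have hd : dist z y ≤ (K : ℝ) * dist z y := by
    calc dist z y = dist (T z) (T y) := by rw [hz_fix, hy_fix]
      _ ≤ (K : ℝ) * dist z y := hlip.dist_le_mul z hz_mem y hy_mem
  have : dist z y = 0 := by
    by_contra h
    have hdp : 0 < dist z y := lt_of_le_of_ne dist_nonneg (Ne.symm h)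
    have : (K : ℝ) * dist z y < 1 * dist z y := by
      apply mul_lt_mul_of_pos_right _ hdp
      exact_mod_cast hK1
    linarith
  exact dist_eq_zero.1 this
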